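/- arXiv:2401.14672 — 3 statements merged into one kernel-verified Lean document; each statement's English description precedes it below -/
import Mathlib

section
/- The function h_A is differentiable on (0,∞) with derivative h_A′(x) = h₀·x^{α−1} + A₀·(1−γ)·x^{α(1−γ)−1}; moreover h_A′ is strictly decreasing on (0,∞), h_A′(x) → +∞ as x → 0⁺, h_A′(x) → 0 as x → ∞, and h_A′ is a bijection from (0,∞) onto (0,∞). -/
open Filter Set Topology

/-! Both exponents `α - 1` and `α(1 - γ) - 1` of `h_A′` are negative, and its coefficients are
`h₀ > 0` and `A₀(1 - γ) ≥ 0`. A positive combination of negative powers is continuous and strictly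
decreasing on `(0, ∞)`, blows up at `0⁺` and vanishes at `∞`; by the intermediate value theorem it
therefore maps `(0, ∞)` bijectively onto itself. -/

theorem hasDerivAt_inv_mul_rpow_add_inv_mul_rpow {α : ℝ} (hα : α ≠ 0) (c d s : ℝ) {x : ℝ}
    (hx : 0 < x) :
    HasDerivAt (fun x : ℝ => (1 / α) * c * x ^ α + (1 / α) * d * x ^ (α * s))
      (c * x ^ (α - 1) + d * s * x ^ (α * s - 1)) x := by
  have h₁ := (Real.hasDerivAt_rpow_const (p := α) (Or.inl hx.ne')).const_mul ((1 / α) * c)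
  have h₂ := (Real.hasDerivAt_rpow_const (p := α * s) (Or.inl hx.ne')).const_mul ((1 / α) * d)
  refine (h₁.add h₂).congr_deriv ?_
  field_simp

theorem bijOn_Ioi_zero_of_strictAntiOn {f : ℝ → ℝ} (hanti : StrictAntiOn f (Ioi 0))
    (hcont : ContinuousOn f (Ioi 0)) (hzero : Tendsto f (𝓝[>] 0) atTop)
    (htop : Tendsto f atTop (𝓝 0)) : BijOn f (Ioi 0) (Ioi 0) := by
  refine ⟨fun x (hx : 0 < x) => ?_, hanti.injOn, fun y (hy : 0 < y) => ?_⟩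
  · have hx₁ : x + 1 ∈ Ioi 0 := mem_Ioi.2 (by linarith)
    have hle : 0 ≤ f (x + 1) := le_of_tendsto htop <| eventually_atTop.2
      ⟨x + 1, fun z hz => hanti.antitoneOn hx₁ (mem_Ioi.2 (by linarith)) hz⟩
    exact hle.trans_lt (hanti hx hx₁ (lt_add_one x))
  · obtain ⟨a, hfa, ha⟩ := ((hzero.eventually_gt_atTop y).and self_mem_nhdsWithin).exists
    obtain ⟨b, hfb, hab⟩ := ((htop.eventually (gt_mem_nhds hy)).and (eventually_gt_atTop a)).exists
    have hsub : Icc a b ⊆ Ioi 0 := fun z hz => lt_of_lt_of_le ha hz.1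
    obtain ⟨x, hx, rfl⟩ := intermediate_value_Ioo' hab.le (hcont.mono hsub) ⟨hfb, hfa⟩
    exact ⟨x, lt_trans ha hx.1, rfl⟩

section PowerSum

variable {a b p q : ℝ}

theorem strictAntiOn_mul_rpow_add_mul_rpow (ha : 0 < a) (hb : 0 ≤ b) (hp : p < 0) (hq : q ≤ 0) :
    StrictAntiOn (fun x : ℝ => a * x ^ p + b * x ^ q) (Ioi 0) := fun x (hx : 0 < x) _ _ hxy =>
  add_lt_add_of_lt_of_le (mul_lt_mul_of_pos_left (Real.rpow_lt_rpow_of_neg hx hxy hp) ha)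
    (mul_le_mul_of_nonneg_left (Real.rpow_le_rpow_of_nonpos hx hxy.le hq) hb)

theorem continuousOn_mul_rpow_add_mul_rpow :
    ContinuousOn (fun x : ℝ => a * x ^ p + b * x ^ q) (Ioi 0) := fun x (hx : 0 < x) =>
  ((continuousAt_const.mul (Real.continuousAt_rpow_const x p (Or.inl hx.ne'))).add
    (continuousAt_const.mul (Real.continuousAt_rpow_const x q (Or.inl hx.ne')))).continuousWithinAt

theorem tendsto_mul_rpow_add_mul_rpow_nhdsGT_zero (ha : 0 < a) (hb : 0 ≤ b) (hp : p < 0) :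
    Tendsto (fun x : ℝ => a * x ^ p + b * x ^ q) (𝓝[>] 0) atTop := by
  refine tendsto_atTop_mono' _ ?_ ((tendsto_rpow_neg_nhdsGT_zero hp).const_mul_atTop ha)
  filter_upwards [self_mem_nhdsWithin] with x (hx : 0 < x)
  exact le_add_of_nonneg_right (mul_nonneg hb (Real.rpow_nonneg hx.le q))

theorem tendsto_rpow_atTop_nhds_zero_of_neg (hp : p < 0) :
    Tendsto (fun x : ℝ => x ^ p) atTop (𝓝 0) := by
  simpa using tendsto_rpow_neg_atTop (neg_pos.2 hp)

theorem tendsto_mul_rpow_add_mul_rpow_atTop (hp : p < 0) (hq : q < 0) :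
    Tendsto (fun x : ℝ => a * x ^ p + b * x ^ q) atTop (𝓝 0) := by
  simpa using ((tendsto_rpow_atTop_nhds_zero_of_neg hp).const_mul a).add
    ((tendsto_rpow_atTop_nhds_zero_of_neg hq).const_mul b)

end PowerSum

theorem hA_deriv_properties_general
    (α γ h₀ A₀ : ℝ)
    (hα : α < 0 ∨ (0 < α ∧ α < 1))
    (hγ0 : 0 < γ) (hγ1 : γ ≤ 1)
    (hh0 : 0 < h₀)
    (hA₀ : 0 ≤ A₀) :
    (∀ x : ℝ, 0 < x →
      HasDerivAt (fun x : ℝ => (1 / α) * h₀ * x ^ α + (1 / α) * A₀ * x ^ (α * (1 - γ)))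
        (h₀ * x ^ (α - 1) + A₀ * (1 - γ) * x ^ (α * (1 - γ) - 1)) x) ∧
    StrictAntiOn (fun x : ℝ => h₀ * x ^ (α - 1) + A₀ * (1 - γ) * x ^ (α * (1 - γ) - 1))
      (Ioi (0 : ℝ)) ∧
    Tendsto (fun x : ℝ => h₀ * x ^ (α - 1) + A₀ * (1 - γ) * x ^ (α * (1 - γ) - 1))
      (nhdsWithin 0 (Ioi (0 : ℝ))) atTop ∧
    Tendsto (fun x : ℝ => h₀ * x ^ (α - 1) + A₀ * (1 - γ) * x ^ (α * (1 - γ) - 1))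
      atTop (nhds 0) ∧
    BijOn (fun x : ℝ => h₀ * x ^ (α - 1) + A₀ * (1 - γ) * x ^ (α * (1 - γ) - 1))
      (Ioi (0 : ℝ)) (Ioi (0 : ℝ)) := by
  have hα₀ : α ≠ 0 := by rcases hα with h | h <;> linarith
  have hp : α - 1 < 0 := by rcases hα with h | h <;> linarith
  have hq : α * (1 - γ) - 1 < 0 := by rcases hα with h | h <;> nlinarith
  have hb : 0 ≤ A₀ * (1 - γ) := mul_nonneg hA₀ (by linarith)
  have hanti := strictAntiOn_mul_rpow_add_mul_rpow hh0 hb hp hq.le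
  have hzero := tendsto_mul_rpow_add_mul_rpow_nhdsGT_zero (q := α * (1 - γ) - 1) hh0 hb hp
  have htop := tendsto_mul_rpow_add_mul_rpow_atTop (a := h₀) (b := A₀ * (1 - γ)) hp hq
  exact ⟨fun x hx => hasDerivAt_inv_mul_rpow_add_inv_mul_rpow hα₀ h₀ A₀ (1 - γ) hx, hanti, hzero,
    htop, bijOn_Ioi_zero_of_strictAntiOn hanti continuousOn_mul_rpow_add_mul_rpow hzero htop⟩

/-- The modified utility `h_A(x) = (1/α)·h₀·x^α + (1/α)·A₀·x^{α(1−γ)}` is differentiable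
on `(0,∞)` with derivative `h_A′(x) = h₀·x^{α−1} + A₀·(1−γ)·x^{α(1−γ)−1}`; moreover
`h_A′` is strictly decreasing on `(0,∞)`, tends to `+∞` at `0⁺`, tends to `0` at `∞`,
and is a bijection from `(0,∞)` onto `(0,∞)`. -/
theorem hA_deriv_properties
    (α γ h₀ A₀ : ℝ)
    (hα : α < 0 ∨ (0 < α ∧ α < 1))
    (hγ0 : 0 < γ) (hγ1 : γ ≤ 1)
    (hh0 : 0 < h₀) (hh1 : h₀ ≤ 1)
    (hA₀ : 0 ≤ A₀) :
    (∀ x : ℝ, 0 < x →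
      HasDerivAt (fun x : ℝ => (1 / α) * h₀ * x ^ α + (1 / α) * A₀ * x ^ (α * (1 - γ)))
        (h₀ * x ^ (α - 1) + A₀ * (1 - γ) * x ^ (α * (1 - γ) - 1)) x) ∧
    StrictAntiOn (fun x : ℝ => h₀ * x ^ (α - 1) + A₀ * (1 - γ) * x ^ (α * (1 - γ) - 1))
      (Ioi (0 : ℝ)) ∧
    Tendsto (fun x : ℝ => h₀ * x ^ (α - 1) + A₀ * (1 - γ) * x ^ (α * (1 - γ) - 1))
      (nhdsWithin 0 (Ioi (0 : ℝ))) atTop ∧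
    Tendsto (fun x : ℝ => h₀ * x ^ (α - 1) + A₀ * (1 - γ) * x ^ (α * (1 - γ) - 1))
      atTop (nhds 0) ∧
    BijOn (fun x : ℝ => h₀ * x ^ (α - 1) + A₀ * (1 - γ) * x ^ (α * (1 - γ) - 1))
      (Ioi (0 : ℝ)) (Ioi (0 : ℝ)) :=
  hA_deriv_properties_general α γ h₀ A₀ hα hγ0 hγ1 hh0 hA₀
end

section
/- If α < 0, then setting κ₂ := (2/α)·max(1, A₀) one has κ₂ < 0 and 0 > h_A(x) ≥ κ₂·(1 + x^α) for all x > 0. -/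
/-! Both terms of `h_A` are a negative multiple `1/α` of a positive quantity, so `h_A < 0`.
For the lower bound, an exponent `β ∈ [α, 0]` satisfies `x^β ≤ 1 + x^α` (compare with `x^α`
for `x ≤ 1` and with `1` for `x ≥ 1`); with `β = α(1 - γ)` this bounds `h₀ x^α + A₀ x^β` by
`2 max(1, A₀) (1 + x^α)`, and dividing by `α < 0` reverses the inequality. -/

theorem Real.rpow_le_one_add_rpow {x α β : ℝ} (hx : 0 < x) (hαβ : α ≤ β) (hβ : β ≤ 0) :
    x ^ β ≤ 1 + x ^ α := by
  rcases le_total x 1 with hx1 | hx1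
  · have := Real.rpow_le_rpow_of_exponent_ge hx hx1 hαβ
    linarith
  · have := Real.rpow_le_one_of_one_le_of_nonpos hx1 hβ
    linarith [Real.rpow_pos_of_pos hx α]

/-- If `α < 0`, then with `κ₂ := (2/α)·max 1 A₀` one has `κ₂ < 0` and
`0 > h_A(x) ≥ κ₂·(1 + x^α)` for all `x > 0`. -/
theorem hA_bounds_neg_alpha
    (α γ h₀ A₀ : ℝ)
    (hα : α < 0)
    (hγ0 : 0 < γ) (hγ1 : γ ≤ 1)
    (hh0 : 0 < h₀) (hh1 : h₀ ≤ 1)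
    (hA₀ : 0 ≤ A₀) :
    (2 / α) * max 1 A₀ < 0 ∧
    ∀ x : ℝ, 0 < x →
      (1 / α) * h₀ * x ^ α + (1 / α) * A₀ * x ^ (α * (1 - γ)) < 0 ∧
      (1 / α) * h₀ * x ^ α + (1 / α) * A₀ * x ^ (α * (1 - γ)) ≥
        (2 / α) * max 1 A₀ * (1 + x ^ α) := by
  set M := max 1 A₀
  have hM1 : 1 ≤ M := le_max_left 1 A₀
  refine ⟨mul_neg_of_neg_of_pos (div_neg_of_pos_of_neg two_pos hα) (by linarith), fun x hx => ?_⟩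
  have hp : 0 < x ^ α := Real.rpow_pos_of_pos hx α
  have hq : 0 < x ^ (α * (1 - γ)) := Real.rpow_pos_of_pos hx _
  have hqp : x ^ (α * (1 - γ)) ≤ 1 + x ^ α :=
    Real.rpow_le_one_add_rpow hx (by nlinarith) (by nlinarith)
  have hsplit : (1 / α) * h₀ * x ^ α + (1 / α) * A₀ * x ^ (α * (1 - γ))
      = (h₀ * x ^ α + A₀ * x ^ (α * (1 - γ))) / α := by ring
  rw [hsplit]
  constructor
  · exact div_neg_of_pos_of_neg (by positivity) hα
  · have hsum : h₀ * x ^ α + A₀ * x ^ (α * (1 - γ)) ≤ 2 * M * (1 + x ^ α) := by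
      have h₀_le : h₀ * x ^ α ≤ M * (1 + x ^ α) := by nlinarith
      have A₀_le : A₀ * x ^ (α * (1 - γ)) ≤ M * (1 + x ^ α) :=
        mul_le_mul (le_max_right 1 A₀) hqp hq.le (by linarith)
      linarith
    calc 2 / α * M * (1 + x ^ α) = 2 * M * (1 + x ^ α) / α := by ring
      _ ≤ _ := div_le_div_of_nonpos_of_le hα.le hsum
end

section
/- If α ∈ (0,1), then the function z ↦ Φ(e^z) is convex on ℝ, where Φ(u) := sup_{x>0} (h_A(x) − u·x) for u > 0. -/
open Set

/-! Substituting `x = e^{s - z}` turns `Φ(e^z)` into `⨆ s, (c₁ e^{α(s-z)} + c₂ e^{β(s-z)} - e^s)`,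
a supremum of functions that are convex in `z`. Sublinear growth of `x^α` and `x^β` bounds this
supremum, so it is convex. -/

theorem convexOn_ciSup {E ι : Type*} [AddCommMonoid E] [Module ℝ E] [Nonempty ι] {s : Set E}
    {f : ι → E → ℝ} (hf : ∀ i, ConvexOn ℝ s (f i))
    (hbdd : ∀ x ∈ s, BddAbove (range fun i => f i x)) :
    ConvexOn ℝ s fun x => ⨆ i, f i x := by
  obtain ⟨i₀⟩ := ‹Nonempty ι›
  refine ⟨(hf i₀).1, fun x hx y hy a b ha hb hab => ciSup_le fun i => ?_⟩
  calc f i (a • x + b • y) ≤ a • f i x + b • f i y := (hf i).2 hx hy ha hb hab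
    _ ≤ a • (⨆ i, f i x) + b • ⨆ i, f i y := by
      gcongr
      · exact le_ciSup (hbdd x hx) i
      · exact le_ciSup (hbdd y hy) i

theorem convexOn_mul_exp_mul_sub {c : ℝ} (hc : 0 ≤ c) (k s : ℝ) :
    ConvexOn ℝ univ fun z => c * Real.exp (k * (s - z)) := by
  refine ⟨convex_univ, fun x _ y _ a b ha hb hab => ?_⟩
  have hexp := convexOn_exp.2 (mem_univ (k * (s - x))) (mem_univ (k * (s - y))) ha hb hab
  have haffine : k * (s - (a * x + b * y)) = a * (k * (s - x)) + b * (k * (s - y)) := by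
    linear_combination k * s * hab.symm
  simp only [smul_eq_mul] at hexp ⊢
  rw [haffine]
  nlinarith [mul_le_mul_of_nonneg_left hexp hc]

theorem exists_rpow_le_mul_add {k ε : ℝ} (hk₀ : 0 ≤ k) (hk₁ : k < 1) (hε : 0 < ε) :
    ∃ C, ∀ x, 0 ≤ x → x ^ k ≤ ε * x + C := by
  set x₀ := ε ^ (k - 1)⁻¹
  have hx₀ : 0 < x₀ := Real.rpow_pos_of_pos hε _
  refine ⟨x₀ ^ k, fun x hx => ?_⟩
  rcases le_total x x₀ with hle | hge
  · have := Real.rpow_le_rpow hx hle hk₀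
    nlinarith
  · have hxpos : 0 < x := hx₀.trans_le hge
    have hslope : x ^ (k - 1) ≤ ε := by
      calc x ^ (k - 1) ≤ x₀ ^ (k - 1) := Real.rpow_le_rpow_of_nonpos hx₀ hge (by linarith)
        _ = ε := Real.rpow_inv_rpow hε.le (by linarith)
    rw [Real.rpow_sub_one hxpos.ne', div_le_iff₀ hxpos] at hslope
    linarith [Real.rpow_nonneg hx₀.le k]

theorem exists_mul_rpow_sub_mul_le {c k u : ℝ} (hc : 0 ≤ c) (hk₀ : 0 ≤ k) (hk₁ : k < 1)
    (hu : 0 < u) : ∃ C, ∀ x, 0 ≤ x → c * x ^ k - u * x ≤ C := by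
  obtain ⟨C, hC⟩ := exists_rpow_le_mul_add hk₀ hk₁ (div_pos hu (by linarith : 0 < c + 1))
  refine ⟨c * C, fun x hx => ?_⟩
  have hcε : c * (u / (c + 1)) ≤ u := by
    rw [mul_div_assoc', div_le_iff₀ (by linarith)]
    nlinarith
  nlinarith [mul_le_mul_of_nonneg_left (hC x hx) hc, mul_le_mul_of_nonneg_right hcε hx]

theorem bddAbove_image_mul_rpow_add_mul_rpow_sub_mul {c₁ c₂ k₁ k₂ u : ℝ} (hc₁ : 0 ≤ c₁)
    (hc₂ : 0 ≤ c₂) (hk₁₀ : 0 ≤ k₁) (hk₁₁ : k₁ < 1) (hk₂₀ : 0 ≤ k₂) (hk₂₁ : k₂ < 1)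
    (hu : 0 < u) :
    BddAbove ((fun x => c₁ * x ^ k₁ + c₂ * x ^ k₂ - u * x) '' Ioi 0) := by
  obtain ⟨C₁, hC₁⟩ := exists_mul_rpow_sub_mul_le hc₁ hk₁₀ hk₁₁ (half_pos hu)
  obtain ⟨C₂, hC₂⟩ := exists_mul_rpow_sub_mul_le hc₂ hk₂₀ hk₂₁ (half_pos hu)
  refine ⟨C₁ + C₂, ?_⟩
  rintro _ ⟨x, hx, rfl⟩
  linarith [hC₁ x (le_of_lt hx), hC₂ x (le_of_lt hx)]

theorem image_Ioi_zero_eq_range_exp_sub (g : ℝ → ℝ) (z : ℝ) :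
    g '' Ioi 0 = range fun s => g (Real.exp (s - z)) := by
  rw [← Real.range_exp, ← range_comp]
  exact ((Equiv.subRight z).surjective.range_comp (g ∘ Real.exp)).symm

theorem convexOn_sSup_image_mul_rpow_add_mul_rpow_sub_exp_mul {c₁ c₂ k₁ k₂ : ℝ} (hc₁ : 0 ≤ c₁)
    (hc₂ : 0 ≤ c₂) (hk₁₀ : 0 ≤ k₁) (hk₁₁ : k₁ < 1) (hk₂₀ : 0 ≤ k₂) (hk₂₁ : k₂ < 1) :
    ConvexOn ℝ univ fun z =>
      sSup ((fun x => c₁ * x ^ k₁ + c₂ * x ^ k₂ - Real.exp z * x) '' Ioi 0) := by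
  have hsubst : ∀ z, (fun x => c₁ * x ^ k₁ + c₂ * x ^ k₂ - Real.exp z * x) '' Ioi 0 =
      range fun s => c₁ * Real.exp (k₁ * (s - z)) + c₂ * Real.exp (k₂ * (s - z)) - Real.exp s := by
    intro z
    rw [image_Ioi_zero_eq_range_exp_sub _ z]
    refine congrArg range (funext fun s => ?_)
    rw [← Real.exp_mul, ← Real.exp_mul, ← Real.exp_add]
    ring_nf
  simp_rw [hsubst]
  refine convexOn_ciSup (fun s => ?_) (fun z _ => ?_)
  · exact ((convexOn_mul_exp_mul_sub hc₁ k₁ s).add (convexOn_mul_exp_mul_sub hc₂ k₂ s)).sub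
      (concaveOn_const _ convex_univ)
  · rw [← hsubst]
    exact bddAbove_image_mul_rpow_add_mul_rpow_sub_mul hc₁ hc₂ hk₁₀ hk₁₁ hk₂₀ hk₂₁ (Real.exp_pos z)

theorem phi_exp_convex_general
    (α γ h₀ A₀ : ℝ)
    (hα0 : 0 < α) (hα1 : α < 1)
    (hγ0 : 0 < γ) (hγ1 : γ ≤ 1)
    (hh0 : 0 < h₀)
    (hA₀ : 0 ≤ A₀) :
    ConvexOn ℝ univ (fun z : ℝ =>
      sSup ((fun x : ℝ =>
        (1 / α) * h₀ * x ^ α + (1 / α) * A₀ * x ^ (α * (1 - γ)) - Real.exp z * x) ''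
          Ioi (0 : ℝ))) :=
  convexOn_sSup_image_mul_rpow_add_mul_rpow_sub_exp_mul (by positivity) (by positivity) hα0.le hα1
    (mul_nonneg hα0.le (by linarith)) (by nlinarith)

/-- If `α ∈ (0,1)`, the function `z ↦ Φ(e^z)` is convex on `ℝ`, where
`Φ(u) = sup_{x>0} (h_A(x) − u·x)` is the Legendre–Fenchel transform of
`h_A(x) = (1/α)·h₀·x^α + (1/α)·A₀·x^{α(1−γ)}`. -/
theorem phi_exp_convex
    (α γ h₀ A₀ : ℝ)
    (hα0 : 0 < α) (hα1 : α < 1)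
    (hγ0 : 0 < γ) (hγ1 : γ ≤ 1)
    (hh0 : 0 < h₀) (hh1 : h₀ ≤ 1)
    (hA₀ : 0 ≤ A₀) :
    ConvexOn ℝ univ (fun z : ℝ =>
      sSup ((fun x : ℝ =>
        (1 / α) * h₀ * x ^ α + (1 / α) * A₀ * x ^ (α * (1 - γ)) - Real.exp z * x) ''
          Ioi (0 : ℝ))) :=
  phi_exp_convex_general α γ h₀ A₀ hα0 hα1 hγ0 hγ1 hh0 hA₀
end
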